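/- arXiv:2304.06498 — 2 statements merged into one kernel-verified Lean document; each statement's English description precedes it below -/
import Mathlib

section
/- If x → x' is a move in NIM(k+1,k) from a position x with B(x) odd, then B(x') ≥ B(x) − 2. -/
/-- `z` is a basic position with parameter `b`: coordinate sum `k*b`, all coordinates
at most `b`, all coordinates even if `b` is even, exactly one even if `b` is odd. -/
def IsBasic (k : ℕ) (z : Fin (k+1) → ℕ) (b : ℕ) : Prop :=
  (∑ i, z i) = k * b ∧ (∀ i, z i ≤ b) ∧
    (Even b → ∀ i, Even (z i)) ∧ (Odd b → ∃! i, Even (z i))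

/-- `Pre k y x` means `y ⪯ x`: the sorted vector of `y` is componentwise ≤ that of `x`. -/
def Pre (k : ℕ) (y x : Fin (k+1) → ℕ) : Prop :=
  ∀ i, (y ∘ Tuple.sort y) i ≤ (x ∘ Tuple.sort x) i

/-- `BVal k x = max { b : some basic z with parameter b satisfies z ⪯ x }`. -/
noncomputable def BVal (k : ℕ) (x : Fin (k+1) → ℕ) : ℕ :=
  sSup {b | ∃ z, IsBasic k z b ∧ Pre k z x}

/-- A move in NIM(k+1,k): keep coordinate `i`, decrease every other (positive) coordinate by 1. -/
def MoveK (k : ℕ) (x y : Fin (k+1) → ℕ) : Prop :=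
  ∃ i, (∀ j, j ≠ i → 0 < x j) ∧ ∀ j, y j = if j = i then x j else x j - 1

/-- The M-move: keep a smallest even coordinate if one exists, otherwise keep a
largest coordinate; decrease the other k (positive) coordinates by 1. -/
def MMove (k : ℕ) (x y : Fin (k+1) → ℕ) : Prop :=
  ∃ i, (∀ j, j ≠ i → 0 < x j) ∧
    ((∃ j, Even (x j)) → Even (x i) ∧ ∀ j, Even (x j) → x i ≤ x j) ∧
    ((∀ j, Odd (x j)) → ∀ j, x j ≤ x i) ∧
    (∀ j, y j = if j = i then x j else x j - 1)

/-- Exceptional position: all coordinates odd, all `< m`, and `|x| = k*m + k - 1`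
for some even `m`. -/
def Exceptional (k : ℕ) (x : Fin (k+1) → ℕ) : Prop :=
  ∃ m, Even m ∧ (∀ i, Odd (x i)) ∧ (∀ i, x i < m) ∧ (∑ i, x i) = k * m + k - 1

/-- `MVal k x m`: playing the M-rule from `x`, the game ends after exactly `m` moves. -/
inductive MVal (k : ℕ) : (Fin (k+1) → ℕ) → ℕ → Prop
  | zero (x) : (¬ ∃ y, MoveK k x y) → MVal k x 0
  | succ (x y m) : MMove k x y → MVal k y m → MVal k x (m + 1)

/-!
Let `B(x) = b + 2 ≥ 3` be odd and let `z ⪯ x` be basic with `b(z) = b + 2`, with unique even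
coordinate `e`. Lowering `z_e` and a smallest odd coordinate `z_p` by one and every other
coordinate by two gives a basic `w` with `b(w) = b`; if `z_e = 0`, all other coordinates
equal `b + 2` and we lower just those by two. In both cases `w_j ≤ z_j - 1` for every `j`, while a
move lowers each coordinate of `x` by at most one, so `w ⪯ x'` and `B(x') ≥ b`.
That `w` is basic rests on `z_i + z_j ≥ b + 2` for `i ≠ j` (the other `k - 1` coordinates sum
to at most `(k - 1)(b + 2)`): it forces the coordinates off `e` to be `b + 2` when `z_e = 0`,
and otherwise all coordinates off `e` and `p` to be at least `3`.
-/

open Finset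

section Sorting

variable {n : ℕ} {α : Type*} [LinearOrder α]

lemma Fin.exists_le_le_of_injective {φ : Fin n → Fin n} (hφ : φ.Injective) (i : Fin n) :
    ∃ j ≤ i, i ≤ φ j := by
  by_contra! hcon
  have hmaps : ∀ j ∈ Iic i, φ j ∈ Iio i := fun j hj => mem_Iio.mpr (hcon j (mem_Iic.mp hj))
  have hcard := card_le_card_of_injOn φ hmaps hφ.injOn
  rw [Fin.card_Iic, Fin.card_Iio] at hcard
  omega

lemma Tuple.comp_sort_le_comp_sort {y x : Fin n → α} (h : y ≤ x) (i : Fin n) :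
    (y ∘ Tuple.sort y) i ≤ (x ∘ Tuple.sort x) i := by
  obtain ⟨j, hji, hij⟩ := Fin.exists_le_le_of_injective
    ((Tuple.sort y).symm.injective.comp (Tuple.sort x).injective) i
  calc (y ∘ Tuple.sort y) i
      ≤ (y ∘ Tuple.sort y) ((Tuple.sort y).symm (Tuple.sort x j)) := Tuple.monotone_sort y hij
    _ = y (Tuple.sort x j) := by simp
    _ ≤ x (Tuple.sort x j) := h _
    _ ≤ (x ∘ Tuple.sort x) i := Tuple.monotone_sort x hji

end Sorting

section Pre

variable {k : ℕ} {y x : Fin (k+1) → ℕ}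

lemma pre_iff_exists_perm : Pre k y x ↔ ∃ σ : Equiv.Perm (Fin (k+1)), ∀ j, y (σ j) ≤ x j := by
  constructor
  · intro h
    refine ⟨(Tuple.sort x).symm.trans (Tuple.sort y), fun j => ?_⟩
    simpa only [Equiv.trans_apply, Function.comp_apply, Equiv.apply_symm_apply]
      using h ((Tuple.sort x).symm j)
  · rintro ⟨σ, hσ⟩
    rw [Pre, ← Tuple.comp_perm_comp_sort_eq_comp_sort (σ := σ)]
    exact Tuple.comp_sort_le_comp_sort hσ

lemma Pre.sum_le (h : Pre k y x) : ∑ i, y i ≤ ∑ i, x i := by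
  simpa only [Function.comp_apply, Equiv.sum_comp] using sum_le_sum (s := univ) fun i _ => h i

end Pre

section IsBasic

variable {k b : ℕ} {z : Fin (k+1) → ℕ}

lemma IsBasic.le_add_of_ne (hz : IsBasic k z b) {i j : Fin (k+1)} (hij : i ≠ j) :
    b ≤ z i + z j := by
  obtain ⟨m, rfl⟩ : ∃ m, k = m + 1 := by
    rcases k with _ | m
    · exact absurd (Subsingleton.elim (α := Fin 1) i j) hij
    · exact ⟨m, rfl⟩
  have hrest : ∑ l ∈ {i, j}ᶜ, z l ≤ #{i, j}ᶜ • b := sum_le_card_nsmul _ _ _ fun l _ => hz.2.1 l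
  rw [card_compl, card_pair hij, Fintype.card_fin, smul_eq_mul,
    show m + 1 + 1 - 2 = m by omega] at hrest
  have hsplit := sum_add_sum_compl {i, j} z
  rw [sum_pair hij, hz.1] at hsplit
  nlinarith

lemma IsBasic.eq_zero_of_forall_ne_le (hz : IsBasic k z b) (e : Fin (k+1))
    (h : ∀ j ≠ e, b ≤ z j) : z e = 0 := by
  have hrest : #{e}ᶜ • b ≤ ∑ l ∈ {e}ᶜ, z l :=
    card_nsmul_le_sum _ _ _ fun l hl => h l (by simpa using hl)
  rw [card_compl, card_singleton, Fintype.card_fin, Nat.add_sub_cancel, smul_eq_mul] at hrest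
  have hsplit := sum_add_sum_compl {e} z
  rw [sum_singleton, hz.1] at hsplit
  omega

lemma IsBasic.exists_pivots (hb : Odd b) (hz : IsBasic k z (b + 2)) :
    ∃ e p, Even (z e) ∧ (∀ j ≠ e, Odd (z j)) ∧
      (p = e ∧ z e = 0 ∨ p ≠ e ∧ 0 < z e ∧ z p < b + 2) ∧ ∀ j ≠ e, j ≠ p → 3 ≤ z j := by
  obtain ⟨e, he, he_unique⟩ := hz.2.2.2 (hb.add_even even_two)
  have hodd : ∀ j ≠ e, Odd (z j) := fun j hj =>
    Nat.not_even_iff_odd.mp fun h => hj (he_unique j h)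
  have hb' := Nat.odd_iff.mp hb
  refine ⟨e, ?_⟩
  by_cases hze : z e = 0
  · refine ⟨e, he, hodd, Or.inl ⟨rfl, hze⟩, fun j hje _ => ?_⟩
    have := hz.le_add_of_ne hje
    omega
  obtain ⟨j₀, hj₀e, hj₀⟩ : ∃ j ≠ e, z j < b + 2 := by
    by_contra! hall
    exact hze (hz.eq_zero_of_forall_ne_le e hall)
  obtain ⟨p, hp, hmin⟩ :=
    exists_min_image (univ.erase e) z ⟨j₀, mem_erase.mpr ⟨hj₀e, mem_univ _⟩⟩
  have hpe := (mem_erase.mp hp).1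
  refine ⟨p, he, hodd, Or.inr ⟨hpe, by omega, (hmin j₀ (by simpa using hj₀e)).trans_lt hj₀⟩,
    fun j hje hjp => ?_⟩
  have := hmin j (by simpa using hje)
  have := hz.le_add_of_ne hjp
  have := Nat.odd_iff.mp (hodd j hje)
  omega

def lowerPivots (z : Fin (k+1) → ℕ) (e p : Fin (k+1)) : Fin (k+1) → ℕ :=
  fun j => z j + (if j = e then 1 else 0) + (if j = p then 1 else 0) - 2

lemma lowerPivots_le_sub_one {e p : Fin (k+1)} (hp : p = e → z e = 0) (j : Fin (k+1)) :
    lowerPivots z e p j ≤ z j - 1 := by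
  unfold lowerPivots
  split_ifs with hje hjp
  · subst hje hjp
    rw [hp rfl]
  all_goals omega

lemma IsBasic.isBasic_lowerPivots (hb : Odd b) (hz : IsBasic k z (b + 2)) {e p : Fin (k+1)}
    (he : Even (z e)) (hodd : ∀ j ≠ e, Odd (z j))
    (hp : p = e ∧ z e = 0 ∨ p ≠ e ∧ 0 < z e ∧ z p < b + 2) (hrest : ∀ j ≠ e, j ≠ p → 3 ≤ z j) :
    IsBasic k (lowerPivots z e p) b := by
  set w := lowerPivots z e p with hw
  have hb' := Nat.odd_iff.mp hb
  have hcoord : ∀ j, w j + 2 = z j + (if j = e then 1 else 0) + (if j = p then 1 else 0) ∧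
      w j ≤ b ∧ (w j % 2 = 0 ↔ j = p) := by
    intro j
    have := hz.2.1 j
    by_cases hje : j = e
    · subst hje
      have := Nat.even_iff.mp he
      rcases hp with ⟨rfl, hze⟩ | ⟨hpe, hze, -⟩
      · simp only [hw, lowerPivots, if_true, iff_true]; omega
      · simp only [hw, lowerPivots, Ne.symm hpe, if_true, if_false, iff_false]; omega
    · have := Nat.odd_iff.mp (hodd j hje)
      by_cases hjp : j = p
      · subst hjp
        rcases hp with ⟨rfl, -⟩ | ⟨-, -, hpb⟩
        · exact absurd rfl hje
        · simp only [hw, lowerPivots, if_true, if_neg hje, iff_true]; omega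
      · have := hrest j hje hjp
        simp only [hw, lowerPivots, hje, hjp, if_false, iff_false]; omega
  refine ⟨?_, fun j => (hcoord j).2.1, fun h => absurd h (Nat.not_even_iff_odd.mpr hb),
    fun _ => ⟨p, ?_, fun j hj => ?_⟩⟩
  · have hsum : ∑ j, (w j + 2) =
        ∑ j, (z j + (if j = e then 1 else 0) + (if j = p then 1 else 0)) :=
      sum_congr rfl fun j _ => (hcoord j).1
    simp only [sum_add_distrib, sum_ite_eq', mem_univ, if_true, sum_const, card_univ,
      Fintype.card_fin, smul_eq_mul, hz.1] at hsum
    linarith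
  · exact Nat.even_iff.mpr ((hcoord p).2.2.mpr rfl)
  · exact (hcoord j).2.2.mp (Nat.even_iff.mp hj)

lemma IsBasic.exists_descent (hb : Odd b) (hz : IsBasic k z (b + 2)) :
    ∃ w, IsBasic k w b ∧ ∀ j, w j ≤ z j - 1 := by
  obtain ⟨e, p, he, hodd, hp, hrest⟩ := hz.exists_pivots hb
  refine ⟨_, hz.isBasic_lowerPivots hb he hodd hp hrest, lowerPivots_le_sub_one fun hpe => ?_⟩
  rcases hp with ⟨-, hze⟩ | ⟨hpe', -⟩
  exacts [hze, absurd hpe hpe']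

lemma bddAbove_basic (hk : 1 ≤ k) (x : Fin (k+1) → ℕ) :
    BddAbove {b | ∃ z, IsBasic k z b ∧ Pre k z x} := by
  refine ⟨∑ i, x i, ?_⟩
  rintro c ⟨w, hw, hwx⟩
  calc c ≤ k * c := Nat.le_mul_of_pos_left c hk
    _ = ∑ i, w i := hw.1.symm
    _ ≤ ∑ i, x i := hwx.sum_le

lemma IsBasic.le_bval (hk : 1 ≤ k) {x : Fin (k+1) → ℕ} (hz : IsBasic k z b) (hzx : Pre k z x) :
    b ≤ BVal k x :=
  le_csSup (bddAbove_basic hk x) ⟨z, hz, hzx⟩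

lemma exists_isBasic_bval (hk : 1 ≤ k) (x : Fin (k+1) → ℕ) (hx : 0 < BVal k x) :
    ∃ z, IsBasic k z (BVal k x) ∧ Pre k z x := by
  refine Nat.sSup_mem (s := {b | ∃ z, IsBasic k z b ∧ Pre k z x}) ?_ (bddAbove_basic hk x)
  by_contra hempty
  rw [Set.not_nonempty_iff_eq_empty] at hempty
  rw [BVal, hempty, csSup_empty] at hx
  exact hx.false

end IsBasic

lemma MoveK.sub_one_le {k : ℕ} {x x' : Fin (k+1) → ℕ} (h : MoveK k x x') (j : Fin (k+1)) :
    x j - 1 ≤ x' j := by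
  obtain ⟨i, -, hx'⟩ := h
  rw [hx' j]
  split_ifs <;> omega

theorem stmt8 (k : ℕ) (hk : 2 ≤ k) (x x' : Fin (k+1) → ℕ)
    (hodd : Odd (BVal k x)) (h : MoveK k x x') :
    BVal k x - 2 ≤ BVal k x' := by
  rcases Nat.lt_or_ge (BVal k x) 2 with hsmall | hlarge
  · omega
  obtain ⟨z, hz, hzx⟩ := exists_isBasic_bval (by omega) x (by omega)
  obtain ⟨b, hb⟩ := Nat.exists_eq_add_of_le' hlarge
  rw [hb] at hz hodd ⊢
  obtain ⟨w, hw, hwz⟩ := hz.exists_descent ((Nat.odd_add.mp hodd).mpr even_two)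
  obtain ⟨σ, hσ⟩ := pre_iff_exists_perm.mp hzx
  have hwx' : Pre k w x' := pre_iff_exists_perm.mpr
    ⟨σ, fun j => (hwz (σ j)).trans ((Nat.sub_le_sub_right (hσ j) 1).trans (h.sub_one_le j))⟩
  simpa using hw.le_bval (by omega) hwx'
end

section
/- A position x of NIM(k+1,k) satisfies R(x) = m with all plays under the M-rule, and x is m-critical (minimal under ⪰ among positions with M-value m), if and only if either (A) |x| = k·m, max_i x_i ≤ m, and x is all-even when m is even while exactly one coordinate of x is even when m is odd; or (B) |x| = k·m + k − 1, max_i x_i < m, m is even, and all coordinates of x are odd. -/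
open Finset

namespace Tuple

variable {n : ℕ} {α : Type*} [LinearOrder α]

theorem card_filter_comp_sort_le (f : Fin n → α) (a : α) :
    #{i | (f ∘ sort f) i ≤ a} = #{i | f i ≤ a} :=
  card_equiv (sort f) (by simp)

theorem comp_sort_le_comp_sort_s19 {s t : Fin n → α} (h : s ≤ t) :
    s ∘ sort s ≤ t ∘ sort t := by
  intro j
  rw [← lt_card_le_iff_apply_le_of_monotone (monotone_sort s), card_filter_comp_sort_le]
  calc (j : ℕ) < #{i | (t ∘ sort t) i ≤ (t ∘ sort t) j} :=
        (lt_card_le_iff_apply_le_of_monotone (monotone_sort t)).2 le_rfl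
    _ = #{i | t i ≤ (t ∘ sort t) j} := card_filter_comp_sort_le t _
    _ ≤ #{i | s i ≤ (t ∘ sort t) j} :=
        card_le_card fun i hi => by
          simp only [mem_filter, mem_univ, true_and] at hi ⊢
          exact (h i).trans hi

theorem comp_sort_eq_self {f : Fin n → α} (hf : Monotone f) : f ∘ sort f = f := by
  rw [sort_eq_refl_iff_monotone.2 hf]
  rfl

theorem comp_sort_le_of_le_of_monotone {s t : Fin n → α} (ht : Monotone t) (h : s ≤ t) :
    s ∘ sort s ≤ t := by
  simpa only [comp_sort_eq_self ht] using comp_sort_le_comp_sort_s19 h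

end Tuple

open Tuple

theorem sum_add_sum_eq_of_eq_add_of_notMem {n : ℕ} {s a : Fin n → ℕ} (T : Finset (Fin n))
    (c : ℕ) (h : ∀ j ∉ T, s j = a j + c) :
    ∑ j, s j + ∑ j ∈ T, a j = ∑ j, a j + ∑ j ∈ T, s j + (n - #T) * c := by
  rw [← sum_add_sum_compl T s, ← sum_add_sum_compl T a,
    sum_congr rfl fun j hj => h j (mem_compl.1 hj), sum_add_distrib, sum_const, card_compl,
    Fintype.card_fin, smul_eq_mul]
  ring

theorem sum_add_two_mul_le_of_eq_zero {n c : ℕ} {x : Fin n → ℕ} (hcap : ∀ l, x l ≤ c)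
    {i j : Fin n} (hij : i ≠ j) (hi : x i = 0) (hj : x j = 0) :
    ∑ l, x l + 2 * c ≤ n * c := by
  have h2 : 2 ≤ n := by simpa [card_pair hij] using card_le_univ {i, j}
  calc ∑ l, x l + 2 * c = ∑ l ∈ {i, j}ᶜ, x l + 2 * c := by
        rw [← sum_add_sum_compl {i, j} x, sum_pair hij, hi, hj, zero_add, zero_add]
    _ ≤ #{i, j}ᶜ * c + 2 * c := by
        gcongr
        simpa using sum_le_card_nsmul _ _ _ fun l _ => hcap l
    _ = n * c := by
        rw [card_compl, card_pair hij, Fintype.card_fin, ← add_mul, Nat.sub_add_cancel h2]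

theorem exists_min_even {n : ℕ} (x : Fin n → ℕ) (h : ∃ j, Even (x j)) :
    ∃ i, Even (x i) ∧ ∀ j, Even (x j) → x i ≤ x j := by
  obtain ⟨j, hj⟩ := h
  obtain ⟨i, hi, hmin⟩ :=
    (univ.filter fun j => Even (x j)).exists_min_image x ⟨j, by simpa using hj⟩
  simp only [mem_filter, mem_univ, true_and] at hi hmin
  exact ⟨i, hi, hmin⟩

theorem pos_of_ne_of_even_le {n c : ℕ} {x : Fin n → ℕ} {i : Fin n}
    (hmin : ∀ j, Even (x j) → x i ≤ x j) (hcap : ∀ j, x j ≤ c)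
    (hsum : n * c < ∑ j, x j + 2 * c) :
    ∀ j, j ≠ i → 0 < x j := by
  intro j hj
  by_contra! h0
  have hxj : x j = 0 := Nat.le_zero.1 h0
  have hxi : x i = 0 := Nat.le_zero.1 (hxj ▸ hmin j (hxj ▸ Even.zero))
  have := sum_add_two_mul_le_of_eq_zero hcap hj hxj hxi
  omega

def dropExcept {n : ℕ} (x : Fin n → ℕ) (i : Fin n) : Fin n → ℕ :=
  fun j => if j = i then x j else x j - 1

section dropExcept

variable {n : ℕ} {x : Fin n → ℕ} {i j : Fin n}

@[simp]
theorem dropExcept_self : dropExcept x i i = x i := if_pos rfl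

theorem dropExcept_of_ne (hj : j ≠ i) : dropExcept x i j = x j - 1 := if_neg hj

theorem even_dropExcept_of_ne (hj : j ≠ i) (hx : 0 < x j) :
    Even (dropExcept x i j) ↔ ¬Even (x j) := by
  rw [dropExcept_of_ne hj, Nat.even_sub hx]
  simp

theorem monotone_dropExcept {p : Fin n} (hx : Monotone x) (hp : ∀ j, p < j → x p < x j) :
    Monotone (dropExcept x p) := by
  intro j l hjl
  have hxjl := hx hjl
  unfold dropExcept
  by_cases hj : j = p <;> by_cases hl : l = p
  · subst hj hl
    exact le_rfl
  · subst hj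
    rw [if_pos rfl, if_neg hl]
    have := hp l (lt_of_le_of_ne hjl (Ne.symm hl))
    omega
  · subst hl
    rw [if_neg hj, if_pos rfl]
    omega
  · rw [if_neg hj, if_neg hl]
    omega

theorem exists_comp_sort_dropExcept (hpos : ∀ j, j ≠ i → 0 < x j) :
    ∃ p, (x ∘ sort x) p = x i ∧ (∀ j, j ≠ p → 0 < (x ∘ sort x) j) ∧
      dropExcept x i ∘ sort (dropExcept x i) = dropExcept (x ∘ sort x) p := by
  set σ := sort x
  set q := σ.symm i
  have hσq : σ q = i := σ.apply_symm_apply i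
  obtain ⟨p, hp, hpmax⟩ := (univ.filter fun j => x (σ j) = x i).exists_max_image id
    ⟨q, by simp [hσq]⟩
  simp only [mem_filter, mem_univ, true_and, id] at hp hpmax
  have hgt : ∀ j, p < j → x (σ p) < x (σ j) := fun j hj =>
    (monotone_sort x hj.le).lt_of_ne fun h => hj.not_ge (hpmax j (hp ▸ h.symm))
  have hσ_eq_i : ∀ {j}, σ j = i ↔ j = q := fun {_} => σ.eq_symm_apply.symm
  have hXpos : ∀ j, j ≠ p → 0 < x (σ j) := by
    intro j hj
    by_cases hjq : j = q
    · subst hjq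
      rw [hσq, ← hp]
      exact hpos _ fun h => hj (hσ_eq_i.1 h).symm
    · exact hpos _ (mt hσ_eq_i.1 hjq)
  refine ⟨p, hp, hXpos, ?_⟩
  -- `p` is the last sorted position holding the value `x i`, so the moved tuple, read through
  -- `σ` after swapping `p` with the sorted position `q` of `i`, is already monotone
  have hperm : dropExcept x i ∘ ((Equiv.swap p q).trans σ) = dropExcept (x ∘ σ) p := by
    funext j
    simp only [Function.comp_apply, Equiv.trans_apply, dropExcept, hσ_eq_i,
      Equiv.swap_apply_eq_iff, Equiv.swap_apply_right]
    by_cases hjp : j = p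
    · subst hjp
      rw [if_pos rfl, if_pos rfl, Equiv.swap_apply_left, hσq, hp]
    rw [if_neg hjp, if_neg hjp]
    by_cases hjq : j = q
    · subst hjq
      rw [Equiv.swap_apply_right, hp, hσq]
    · rw [Equiv.swap_apply_of_ne_of_ne hjp hjq]
  rw [unique_monotone (monotone_sort _) (hperm ▸ monotone_dropExcept (monotone_sort x) hgt),
    hperm]

theorem sum_dropExcept_add (hpos : ∀ j, j ≠ i → 0 < x j) :
    ∑ j, dropExcept x i j + (n - 1) = ∑ j, x j := by
  have h := sum_add_sum_eq_of_eq_add_of_notMem (s := x) (a := dropExcept x i) {i} 1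
    fun j hj => by
      have hji : j ≠ i := by simpa using hj
      rw [dropExcept_of_ne hji]
      have := hpos j hji
      omega
  simp only [sum_singleton, dropExcept_self, card_singleton, mul_one] at h
  omega

theorem dropExcept_le_of_le {c : ℕ} (hi : x i ≤ c) (hx : ∀ j, x j ≤ c + 1) (j : Fin n) :
    dropExcept x i j ≤ c := by
  have := hx j
  unfold dropExcept
  split_ifs with hj
  · exact hj ▸ hi
  · omega

theorem odd_dropExcept_of_ne (hj : j ≠ i) (hx : 0 < x j) :
    Odd (dropExcept x i j) ↔ Even (x j) := by
  rw [← Nat.not_even_iff_odd, even_dropExcept_of_ne hj hx, not_not]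

end dropExcept

def bumpExcept {n : ℕ} (a : Fin n → ℕ) (c : Fin n) : Fin n → ℕ :=
  fun j => if j = c then a j else a j + 1

section bumpExcept

variable {n : ℕ} {a : Fin n → ℕ} {c j : Fin n}

@[simp]
theorem bumpExcept_self : bumpExcept a c c = a c := if_pos rfl

theorem bumpExcept_of_ne (hj : j ≠ c) : bumpExcept a c j = a j + 1 := if_neg hj

theorem sum_bumpExcept (a : Fin n → ℕ) (c : Fin n) :
    ∑ j, bumpExcept a c j = ∑ j, a j + (n - 1) := by
  have hs := sum_add_sum_eq_of_eq_add_of_notMem (s := bumpExcept a c) (a := a) {c} 1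
    fun j hj => bumpExcept_of_ne (by simpa using hj)
  simp only [sum_singleton, bumpExcept_self, card_singleton, mul_one] at hs
  omega

end bumpExcept

def IsExceptional (k : ℕ) (x : Fin (k+1) → ℕ) (m : ℕ) : Prop :=
  (∑ i, x i) = k * m + k - 1 ∧ (∀ i, x i < m) ∧ Even m ∧ ∀ i, Odd (x i)

def IsCanonical (k : ℕ) (x : Fin (k+1) → ℕ) (m : ℕ) : Prop :=
  IsBasic k x m ∨ IsExceptional k x m

/-- The positions reached by the M-rule from an exceptional position with parameter `t + 1`. -/
def IsPostExceptional (k : ℕ) (z : Fin (k+1) → ℕ) (t : ℕ) : Prop :=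
  (∑ i, z i) = k * t + k - 1 ∧ (∀ i, z i ≤ t + 1) ∧ (Odd t → ∃! i, Odd (z i)) ∧
    (Even t → ∃ i j, i ≠ j ∧ ∀ l, Even (z l) ↔ l = i ∨ l = j)

section Game

variable {k m : ℕ} {x : Fin (k+1) → ℕ} {i : Fin (k+1)}

theorem MVal.zero_of_eq_zero {j : Fin (k+1)} (hij : i ≠ j) (hi : x i = 0) (hj : x j = 0) :
    MVal k x 0 :=
  .zero x fun ⟨_, l, hpos, _⟩ => by
    by_cases hil : i = l
    · exact (hpos j (hil ▸ hij.symm)).ne' hj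
    · exact (hpos i hil).ne' hi

theorem MVal.succ_of_even (hpos : ∀ j, j ≠ i → 0 < x j) (hi : Even (x i))
    (hmin : ∀ j, Even (x j) → x i ≤ x j) (h : MVal k (dropExcept x i) m) : MVal k x (m + 1) :=
  .succ x _ m ⟨i, hpos, fun _ => ⟨hi, hmin⟩,
    fun hodd => absurd hi (Nat.not_even_iff_odd.2 (hodd i)), fun _ => rfl⟩ h

theorem MVal.succ_of_odd (hodd : ∀ j, Odd (x j)) (hmax : ∀ j, x j ≤ x i)
    (h : MVal k (dropExcept x i) m) : MVal k x (m + 1) :=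
  .succ x _ m ⟨i, fun j _ => (hodd j).pos,
    fun ⟨j, hj⟩ => absurd hj (Nat.not_even_iff_odd.2 (hodd j)), fun _ => hmax, fun _ => rfl⟩ h

theorem mval_of_isBasic (hk : 2 ≤ k) (hx : IsBasic k x m) : MVal k x m := by
  induction m generalizing x with
  | zero =>
    have h0 : ∀ j, x j = 0 := fun j => Nat.le_zero.1 (hx.2.1 j)
    exact MVal.zero_of_eq_zero (i := 0) (j := Fin.last k) (by simp [Fin.ext_iff]; omega)
      (h0 _) (h0 _)
  | succ m ih =>
    obtain ⟨hsum, hcap, hev, hodd⟩ := hx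
    obtain ⟨i, hi, hmin⟩ := exists_min_even x <| (Nat.even_or_odd (m + 1)).elim
      (fun h => ⟨0, hev h 0⟩) fun h => (hodd h).exists
    have hpos := pos_of_ne_of_even_le hmin hcap (by rw [hsum]; nlinarith)
    have hxi : x i ≤ m := by
      -- otherwise every pile is even, hence at least `x i = m + 1`
      by_contra! h
      have hxi : x i = m + 1 := (hcap i).antisymm h
      have hall : ∀ j, m + 1 ≤ x j := fun j => hxi ▸ hmin j (hev (hxi ▸ hi) j)
      have := card_nsmul_le_sum univ x (m + 1) fun j _ => hall j
      simp only [card_univ, Fintype.card_fin, smul_eq_mul] at this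
      nlinarith
    have hsum' := sum_dropExcept_add hpos
    refine MVal.succ_of_even hpos hi hmin
      (ih ⟨?_, dropExcept_le_of_le hxi hcap, fun hm j => ?_, fun hm => ?_⟩)
    · simp only [add_tsub_cancel_right] at hsum'
      nlinarith
    · by_cases hj : j = i
      · simpa [hj] using hi
      rw [even_dropExcept_of_ne hj (hpos j hj)]
      exact fun hxj => hj ((hodd hm.add_one).unique hxj hi)
    · refine ⟨i, by simpa using hi, fun j (hj : Even (dropExcept x i j)) => ?_⟩
      by_contra hji
      rw [even_dropExcept_of_ne hji (hpos j hji)] at hj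
      exact hj (hev hm.add_one j)

theorem le_of_isPostExceptional_of_even_le {t : ℕ} (hx : IsPostExceptional k x (t + 1))
    (hi : Even (x i)) (hmin : ∀ j, Even (x j) → x i ≤ x j) : x i ≤ t + 1 := by
  obtain ⟨hsum, hcap, hodd, -⟩ := hx
  by_contra! h
  -- then `t` is even and the `k` even piles are at least `t + 2`: the sum is too large
  have hxi : x i = t + 2 := (hcap i).antisymm h
  obtain ⟨w, hw, hwu⟩ := hodd (by grind)
  have hle : ∑ j ∈ univ.erase w, (t + 2) ≤ ∑ j ∈ univ.erase w, x j :=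
    sum_le_sum fun j hj =>
      hxi ▸ hmin j (Nat.not_odd_iff_even.1 fun h => (mem_erase.1 hj).1 (hwu j h))
  rw [sum_const, card_erase_of_mem (mem_univ w), card_univ, Fintype.card_fin,
    smul_eq_mul] at hle
  have := add_sum_erase univ x (mem_univ w)
  have := hw.pos
  grind

theorem isPostExceptional_dropExcept {t : ℕ} (hx : IsPostExceptional k x (t + 1))
    (hi : Even (x i)) (hmin : ∀ j, Even (x j) → x i ≤ x j)
    (hpos : ∀ j, j ≠ i → 0 < x j) : IsPostExceptional k (dropExcept x i) t := by
  have hxi := le_of_isPostExceptional_of_even_le hx hi hmin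
  obtain ⟨hsum, hcap, hodd, hev⟩ := hx
  have hsum' := sum_dropExcept_add hpos
  refine ⟨by grind, dropExcept_le_of_le hxi hcap, fun ht => ?_, fun ht => ?_⟩
  · -- the two even piles of `x` are `i` and some `o`; only `o` turns odd
    obtain ⟨o, hoi, hevs⟩ : ∃ o, o ≠ i ∧ ∀ l, Even (x l) ↔ l = i ∨ l = o := by
      obtain ⟨i₀, j₀, hij, hevs⟩ := hev ht.add_one
      rcases (hevs i).1 hi with rfl | rfl
      · exact ⟨j₀, hij.symm, hevs⟩
      · exact ⟨i₀, hij, fun l => (hevs l).trans or_comm⟩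
    refine ⟨o, (odd_dropExcept_of_ne hoi (hpos o hoi)).2 ((hevs o).2 (.inr rfl)),
      fun l (hl : Odd (dropExcept x i l)) => ?_⟩
    by_cases hli : l = i
    · rw [hli, dropExcept_self] at hl
      exact absurd hi (Nat.not_even_iff_odd.2 hl)
    · rw [odd_dropExcept_of_ne hli (hpos l hli)] at hl
      exact ((hevs l).1 hl).resolve_left hli
  · -- `x` has a single odd pile `w`, which turns even
    obtain ⟨w, hw, hwu⟩ := hodd ht.add_one
    have hwi : w ≠ i := fun h => Nat.not_even_iff_odd.2 hw (h ▸ hi)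
    refine ⟨i, w, hwi.symm, fun l => ?_⟩
    by_cases hli : l = i
    · simp [hli, hi]
    · rw [even_dropExcept_of_ne hli (hpos l hli), Nat.not_even_iff_odd]
      exact ⟨fun h => .inr (hwu l h), fun h => (h.resolve_left hli) ▸ hw⟩

theorem mval_of_isPostExceptional (hk : 2 ≤ k) (hx : IsPostExceptional k x m) :
    MVal k x m := by
  induction m generalizing x with
  | zero =>
    obtain ⟨-, hcap, -, hev⟩ := hx
    obtain ⟨i, j, hij, hevs⟩ := hev Even.zero
    have h0 : ∀ l, l = i ∨ l = j → x l = 0 := fun l hl => by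
      have := (hevs l).2 hl
      have := hcap l
      grind
    exact MVal.zero_of_eq_zero hij (h0 i (.inl rfl)) (h0 j (.inr rfl))
  | succ t ih =>
    have hex : ∃ j, Even (x j) := by
      have : Nontrivial (Fin (k+1)) := Fin.nontrivial_iff_two_le.2 (by omega)
      rcases Nat.even_or_odd (t + 1) with ht | ht
      · obtain ⟨i, j, -, hevs⟩ := hx.2.2.2 ht
        exact ⟨i, (hevs i).2 (.inl rfl)⟩
      · obtain ⟨w, hw, hwu⟩ := hx.2.2.1 ht
        obtain ⟨j, hj⟩ := exists_ne w
        exact ⟨j, Nat.not_odd_iff_even.1 fun h => hj (hwu j h)⟩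
    obtain ⟨i, hi, hmin⟩ := exists_min_even x hex
    have hpos := pos_of_ne_of_even_le hmin hx.2.1 (by grind [hx.1])
    exact MVal.succ_of_even hpos hi hmin (ih (isPostExceptional_dropExcept hx hi hmin hpos))

theorem mval_of_isExceptional (hk : 2 ≤ k) (hx : IsExceptional k x m) : MVal k x m := by
  obtain ⟨hsum, hlt, hm, hodd⟩ := hx
  obtain ⟨t, rfl⟩ : ∃ t, m = t + 1 :=
    Nat.exists_eq_add_one.2 ((Nat.zero_le _).trans_lt (hlt 0))
  obtain ⟨i, -, hmax⟩ := univ.exists_max_image x univ_nonempty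
  have hpos : ∀ j, j ≠ i → 0 < x j := fun j _ => (hodd j).pos
  have hsum' := sum_dropExcept_add hpos
  refine MVal.succ_of_odd hodd (fun j => hmax j (mem_univ j))
    (mval_of_isPostExceptional hk ⟨by grind, dropExcept_le_of_le (hlt i).le
      fun j => (hlt j).le.trans (Nat.le_succ _), fun ht => ⟨i, ?_, fun j hj => ?_⟩,
      fun ht => ?_⟩)
  · simpa using hodd i
  · by_contra hji
    exact (odd_dropExcept_of_ne hji (hpos j hji)).1 hj |> (Nat.not_even_iff_odd.2 (hodd j))
  · exact absurd hm (Nat.not_even_iff_odd.2 ht.add_one)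

theorem mval_of_isCanonical (hk : 2 ≤ k) (hx : IsCanonical k x m) : MVal k x m :=
  hx.elim (mval_of_isBasic hk) (mval_of_isExceptional hk)

theorem isCanonical_comp_perm (σ : Equiv.Perm (Fin (k+1))) :
    IsCanonical k (x ∘ σ) m ↔ IsCanonical k x m := by
  simp only [IsCanonical, IsBasic, IsExceptional, Function.comp_apply, Equiv.sum_comp,
    σ.forall_congr_right (q := fun j => x j ≤ m), σ.forall_congr_right (q := fun j => x j < m),
    σ.forall_congr_right (q := fun j => Even (x j)),
    σ.forall_congr_right (q := fun j => Odd (x j)),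
    σ.existsUnique_congr_right (q := fun j => Even (x j))]

theorem IsCanonical.eq_of_le (hk : 2 ≤ k) {r : Fin (k+1) → ℕ} (hr : IsCanonical k r m)
    (hx : IsCanonical k x m) (h : r ≤ x) : r = x := by
  suffices hsum : ∑ j, r j = ∑ j, x j from
    funext fun j => (sum_eq_sum_iff_of_le fun j _ => h j).1 hsum j (mem_univ j)
  rcases hr with ⟨hr, -, hrev, -⟩ | ⟨hr, -, hm, hrodd⟩ <;>
    rcases hx with ⟨hx, -, -, -⟩ | ⟨hx, -, hm, hxodd⟩
  · rw [hr, hx]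
  · have hlt : ∀ j, r j + 1 ≤ x j := fun j => by
      have := hrev hm j
      have := hxodd j
      have := h j
      grind
    have := sum_le_sum fun j (_ : j ∈ univ) => hlt j
    simp only [sum_add_distrib, sum_const, card_univ, Fintype.card_fin, smul_eq_mul] at this
    omega
  · have := sum_le_sum fun j (_ : j ∈ univ) => h j
    omega
  · rw [hr, hx]

end Game

section Lift

variable {k m : ℕ} {a X : Fin (k+1) → ℕ} {p : Fin (k+1)}

theorem isBasic_bumpExcept {c : Fin (k+1)} (ha : IsBasic k a m) (hc : Odd m → Even (a c)) :
    IsBasic k (bumpExcept a c) (m + 1) := by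
  obtain ⟨hsum, hcap, hev, hodd⟩ := ha
  have hs := sum_bumpExcept a c
  refine ⟨by grind, fun j => ?_, fun hm j => ?_, fun hm => ⟨c, ?_, fun j hj => ?_⟩⟩
  · have := hcap j
    unfold bumpExcept
    split_ifs <;> omega
  · have hm' : Odd m := by grind
    obtain ⟨e, -, he⟩ := hodd hm'
    by_cases hjc : j = c
    · rw [hjc, bumpExcept_self]
      exact hc hm'
    · rw [bumpExcept_of_ne hjc, Nat.even_add_one]
      exact fun h => hjc ((he j h).trans (he c (hc hm')).symm)
  · show Even (bumpExcept a c c)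
    rw [bumpExcept_self]
    exact hev (by grind) c
  · change Even (bumpExcept a c j) at hj
    by_contra hjc
    rw [bumpExcept_of_ne hjc, Nat.even_add_one] at hj
    exact hj (hev (by grind) j)

theorem exists_isBasic_succ_le_of_even (ha : IsBasic k a m) (hm : Even m) (hp : a p ≤ X p)
    (hlt : ∀ j, j ≠ p → a j < X j) : ∃ s, IsBasic k s (m + 1) ∧ s ≤ X := by
  refine ⟨bumpExcept a p, isBasic_bumpExcept ha fun h => absurd hm (Nat.not_even_iff_odd.2 h),
    fun j => ?_⟩
  by_cases hj : j = p
  · rw [hj, bumpExcept_self]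
    exact hp
  · rw [bumpExcept_of_ne hj]
    exact hlt j hj

theorem exists_isExceptional_succ_le {e : Fin (k+1)} (ha : IsBasic k a m) (hm : Odd m)
    (he : Even (a e)) (hodd : ∀ j, j ≠ e → Odd (a j)) (hep : e ≠ p) (hp : a p = X p)
    (hlt : ∀ j, j ≠ p → a j < X j) (hX : ∀ j, Odd (X j) ∧ X j ≤ X p) :
    ∃ s, IsExceptional k s (m + 1) ∧ s ≤ X := by
  obtain ⟨hsum, hcap, -, -⟩ := ha
  set s : Fin (k+1) → ℕ := fun j => if j = p then a j else if j = e then a j + 1 else a j + 2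
  have hsp : s p = a p := if_pos rfl
  have hse : s e = a e + 1 := by simp [s, hep]
  have hsj : ∀ j, j ≠ p → j ≠ e → s j = a j + 2 := fun j hjp hje => by simp [s, hjp, hje]
  have hsum' := sum_add_sum_eq_of_eq_add_of_notMem (s := s) (a := a) {p, e} 2 fun j hj => by
    simp only [mem_insert, mem_singleton, not_or] at hj
    exact hsj j hj.1 hj.2
  rw [sum_pair hep.symm, sum_pair hep.symm, card_pair hep.symm, hsp, hse] at hsum'
  have hae : a e < m := (hcap e).lt_of_ne fun h => Nat.not_even_iff_odd.2 hm (h ▸ he)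
  have hjX : ∀ j, j ≠ p → j ≠ e → a j + 2 ≤ X j := fun j hjp hje => by
    have := hlt j hjp
    have := hodd j hje
    have := (hX j).1
    grind
  refine ⟨s, ⟨by grind, fun j => ?_, hm.add_one, fun j => ?_⟩, fun j => ?_⟩
  · rcases eq_or_ne j p with rfl | hjp
    · grind
    rcases eq_or_ne j e with rfl | hje
    · grind
    · grind [hjX j hjp hje, (hX j).2]
  · rcases eq_or_ne j p with rfl | hjp
    · rw [hsp]
      exact hodd j hep.symm
    rcases eq_or_ne j e with rfl | hje
    · rw [hse]
      exact he.add_one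
    · rw [hsj j hjp hje]
      exact (hodd j hje).add_even even_two
  · rcases eq_or_ne j p with rfl | hjp
    · exact hsp.trans_le hp.le
    rcases eq_or_ne j e with rfl | hje
    · exact hse.trans_le (hlt j hjp)
    · exact (hsj j hjp hje).trans_le (hjX j hjp hje)

theorem exists_isCanonical_succ_le_of_odd (ha : IsBasic k a m) (hm : Odd m) (hp : a p ≤ X p)
    (hlt : ∀ j, j ≠ p → a j < X j) (hX : Odd (X p) → ∀ j, Odd (X j) ∧ X j ≤ X p) :
    ∃ s, IsCanonical k s (m + 1) ∧ s ≤ X := by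
  obtain ⟨e, he, heu⟩ := ha.2.2.2 hm
  have hodd : ∀ j, j ≠ e → Odd (a j) := fun j hj =>
    Nat.not_even_iff_odd.1 fun h => hj (heu j h)
  by_cases h : p = e ∨ a p < X p
  · refine ⟨bumpExcept a e, .inl (isBasic_bumpExcept ha fun _ => he), fun j => ?_⟩
    by_cases hje : j = e
    · rw [hje, bumpExcept_self]
      rcases eq_or_ne e p with rfl | hep
      · exact hp
      · exact (hlt e hep).le
    · rw [bumpExcept_of_ne hje]
      rcases eq_or_ne j p with rfl | hjp
      · exact h.resolve_left hje
      · exact hlt j hjp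
  · rw [not_or, not_lt] at h
    have hXp : a p = X p := hp.antisymm h.2
    obtain ⟨s, hs, hsX⟩ := exists_isExceptional_succ_le ha hm he hodd (Ne.symm h.1) hXp hlt
      (hX (hXp ▸ hodd p h.1))
    exact ⟨s, .inr hs, hsX⟩

theorem exists_isBasic_succ_le_of_isExceptional (hk : 1 ≤ k) (ha : IsExceptional k a m)
    (hp : a p ≤ X p) (hlt : ∀ j, j ≠ p → a j < X j) :
    ∃ s, IsBasic k s (m + 1) ∧ s ≤ X := by
  obtain ⟨hsum, hcap, hm, hodd⟩ := ha
  have : Nontrivial (Fin (k+1)) := Fin.nontrivial_iff_two_le.2 (by omega)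
  obtain ⟨q, hqp⟩ := exists_ne p
  set s := Function.update a q (a q + 1)
  have hsum' := sum_add_sum_eq_of_eq_add_of_notMem (s := s) (a := a) {q} 0 fun j hj =>
    Function.update_of_ne (by simpa using hj) _ _
  simp only [sum_singleton, Function.update_self, mul_zero, add_zero, s] at hsum'
  refine ⟨s, ⟨by grind, fun j => ?_, fun h => absurd hm (Nat.even_add_one.1 h),
    fun _ => ⟨q, ?_, fun j hj => ?_⟩⟩, fun j => ?_⟩
  · have := hcap j
    rcases eq_or_ne j q with rfl | hjq
    · simp only [s, Function.update_self]
      omega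
    · simp only [s, Function.update_of_ne hjq]
      omega
  · simpa [s] using (hodd q).add_one
  · by_contra hjq
    simp only [s, Function.update_of_ne hjq] at hj
    exact Nat.not_even_iff_odd.2 (hodd j) hj
  · rcases eq_or_ne j q with rfl | hjq
    · simpa [s] using hlt j hqp
    · simp only [s, Function.update_of_ne hjq]
      rcases eq_or_ne j p with rfl | hjp
      · exact hp
      · exact (hlt j hjp).le

theorem exists_isCanonical_succ_le (hk : 1 ≤ k) (ha : IsCanonical k a m) (hp : a p ≤ X p)
    (hlt : ∀ j, j ≠ p → a j < X j) (hX : Odd (X p) → ∀ j, Odd (X j) ∧ X j ≤ X p) :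
    ∃ s, IsCanonical k s (m + 1) ∧ s ≤ X := by
  rcases ha with ha | ha
  · rcases Nat.even_or_odd m with hm | hm
    · obtain ⟨s, hs, hsX⟩ := exists_isBasic_succ_le_of_even ha hm hp hlt
      exact ⟨s, .inl hs, hsX⟩
    · exact exists_isCanonical_succ_le_of_odd ha hm hp hlt hX
  · obtain ⟨s, hs, hsX⟩ := exists_isBasic_succ_le_of_isExceptional hk ha hp hlt
    exact ⟨s, .inl hs, hsX⟩

end Lift

theorem exists_isCanonical_le_of_mval {k m : ℕ} (hk : 1 ≤ k) {x : Fin (k+1) → ℕ}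
    (h : MVal k x m) : ∃ r, IsCanonical k r m ∧ Pre k r x := by
  induction h with
  | zero x _ =>
    exact ⟨0, .inl ⟨by simp, fun _ => le_rfl, fun _ _ => .zero, by simp⟩,
      fun _ => Nat.zero_le _⟩
  | succ x y m hmove _ ih =>
    obtain ⟨r, hr, hry⟩ := ih
    obtain ⟨i, hpos, hev, hodd, hy⟩ := hmove
    obtain rfl : y = dropExcept x i := funext hy
    obtain ⟨p, hXp, hXpos, hsort⟩ := exists_comp_sort_dropExcept hpos
    set X := x ∘ sort x
    have hle : ∀ j, (r ∘ sort r) j ≤ dropExcept X p j := hsort ▸ hry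
    have hlt : ∀ j, j ≠ p → (r ∘ sort r) j < X j := fun j hj => by
      have := hle j
      rw [dropExcept_of_ne hj] at this
      have := hXpos j hj
      omega
    -- if the kept pile is odd, the M-rule found no even pile and kept a largest one
    have hX : Odd (X p) → ∀ j, Odd (X j) ∧ X j ≤ X p := by
      rw [hXp]
      intro hxi
      have hall : ∀ j, Odd (x j) := fun j => Nat.not_even_iff_odd.1 fun h =>
        Nat.not_even_iff_odd.2 hxi (hev ⟨j, h⟩).1
      exact fun j => ⟨hall _, hodd hall _⟩
    obtain ⟨s, hs, hsX⟩ := exists_isCanonical_succ_le hk ((isCanonical_comp_perm _).2 hr)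
      (by simpa using hle p) hlt hX
    exact ⟨s, hs, comp_sort_le_of_le_of_monotone (monotone_sort x) hsX⟩

theorem stmt19 (k : ℕ) (hk : 2 ≤ k) (x : Fin (k+1) → ℕ) (m : ℕ) :
    (MVal k x m ∧ ∀ y, MVal k y m → ¬ (Pre k y x ∧ ¬ Pre k x y)) ↔
    (((∑ i, x i) = k * m ∧ (∀ i, x i ≤ m) ∧
        (Even m → ∀ i, Even (x i)) ∧ (Odd m → ∃! i, Even (x i))) ∨
     ((∑ i, x i) = k * m + k - 1 ∧ (∀ i, x i < m) ∧ Even m ∧ ∀ i, Odd (x i))) := by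
  change _ ↔ IsCanonical k x m
  constructor
  · rintro ⟨hx, hmin⟩
    obtain ⟨r, hr, hrx⟩ := exists_isCanonical_le_of_mval (by omega) hx
    have hxr : Pre k x r := not_not.1 fun h => hmin r (mval_of_isCanonical hk hr) ⟨hrx, h⟩
    have hsort : r ∘ sort r = x ∘ sort x := le_antisymm hrx hxr
    rw [← isCanonical_comp_perm (sort x), ← hsort, isCanonical_comp_perm]
    exact hr
  · refine fun hx => ⟨mval_of_isCanonical hk hx, fun y hy ⟨hyx, hxy⟩ => hxy ?_⟩
    obtain ⟨r, hr, hry⟩ := exists_isCanonical_le_of_mval (by omega) hy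
    have hrx : r ∘ sort r = x ∘ sort x := IsCanonical.eq_of_le hk
      ((isCanonical_comp_perm _).2 hr) ((isCanonical_comp_perm _).2 hx) (le_trans hry hyx)
    exact (show x ∘ sort x ≤ y ∘ sort y from hrx ▸ hry)
end
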